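/- Let D be a single-variable domination rule defined by a sequential variable-set automaton (on variables {x, x†}). Suppose that for every n ∈ ℕ there exists a document d such that D admits n pairwise disjoint strict domination pairs on d. Then there exist words u, v, w ∈ Σ* and spans s1, s2 (each possibly undefined) within v such that for every n ≥ 1, the document u v^n w admits at least n pairwise disjoint strict domination pairs of D, namely one in each copy of v, obtained by translating (s1, s2) by the offset of that copy. -/

import Mathlib

namespace DocSpanners

/-- A span: a pair of endpoint positions `[i, j⟩`. -/
abbrev Span : Type := ℕ × ℕ

/-- `s` is a span of document `d`. -/
def IsSpanOf {α : Type} (d : List α) (s : Span) : Prop :=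
  s.1 ≤ s.2 ∧ s.2 ≤ d.length

/-- A (schemaless) mapping over variable type `V`: a partial assignment of spans. -/
abbrev Mapping (V : Type) : Type := V → Option Span

/-- `m` is a mapping of document `d`. -/
def MappingOf {α V : Type} (d : List α) (m : Mapping V) : Prop :=
  ∀ x s, m x = some s → IsSpanOf d s

/-- A spanner: maps documents to sets of mappings. -/
abbrev Spanner (α V : Type) : Type := List α → Set (Mapping V)

/-- Labels of a variable-set automaton: letters and variable markers. -/
inductive Label (α V : Type) : Type where
  | letter (a : α)
  | vopen (x : V)
  | vclose (x : V)
deriving DecidableEq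

/-- The sequence of letters of a ref-word. -/
def letters {α V : Type} (w : List (Label α V)) : List α :=
  w.filterMap fun l => match l with
    | Label.letter a => some a
    | _ => none

/-- A ref-word is valid if for each variable, either its markers do not appear, or
the opening and closing markers appear exactly once with the opening first. -/
def ValidRef {α V : Type} [DecidableEq α] [DecidableEq V] (w : List (Label α V)) : Prop :=
  ∀ x : V,
    (Label.vopen x ∉ w ∧ Label.vclose x ∉ w) ∨
    (w.count (Label.vopen x) = 1 ∧ w.count (Label.vclose x) = 1 ∧
      w.idxOf (Label.vopen x) < w.idxOf (Label.vclose x))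

/-- The mapping defined by a (valid) ref-word: each marked variable is sent to the
span delimited by the positions at which its markers are read. -/
def refMapping {α V : Type} [DecidableEq α] [DecidableEq V] (w : List (Label α V)) :
    Mapping V := fun x =>
  if Label.vopen x ∈ w then
    some ((letters (w.take (w.idxOf (Label.vopen x)))).length,
          (letters (w.take (w.idxOf (Label.vclose x)))).length)
  else none

/-- A variable-set automaton with state type `Q`. -/
structure VA (α V Q : Type) : Type where
  init : Q
  final : Set Q
  trans : Q → Label α V → Q → Prop

/-- Paths in a VA. -/
inductive VA.Path {α V Q : Type} (A : VA α V Q) : Q → List (Label α V) → Q → Prop where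
  | nil (q : Q) : VA.Path A q [] q
  | cons {q q' q'' : Q} {l : Label α V} {w : List (Label α V)} :
      A.trans q l q' → VA.Path A q' w q'' → VA.Path A q (l :: w) q''

/-- The VA accepts the ref-word `w` (an accepting run reads `w`). -/
def VA.AcceptsRef {α V Q : Type} (A : VA α V Q) (w : List (Label α V)) : Prop :=
  ∃ qf ∈ A.final, A.Path A.init w qf

/-- A VA is sequential if every accepting run is valid. -/
def VA.Sequential {α V Q : Type} [DecidableEq α] [DecidableEq V] (A : VA α V Q) : Prop :=
  ∀ w, A.AcceptsRef w → ValidRef w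

/-- The spanner defined by a (sequential) VA. -/
def VA.spanner {α V Q : Type} [DecidableEq α] [DecidableEq V] (A : VA α V Q) :
    Spanner α V := fun d =>
  {m | ∃ w, A.AcceptsRef w ∧ letters w = d ∧ refMapping w = m}

/-- A spanner is regular if it is defined by some sequential VA with finitely many states. -/
def IsRegular {α V : Type} [DecidableEq α] [DecidableEq V] (P : Spanner α V) : Prop :=
  ∃ (Q : Type) (_ : Fintype Q) (A : VA α V Q), A.Sequential ∧ A.spanner = P

/-- The skyline operator: keep only the mappings of `P d` that are maximal under `R d`. -/
def skyline {α V : Type} (P : Spanner α V)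
    (R : List α → Mapping V → Mapping V → Prop) : Spanner α V := fun d =>
  {m | m ∈ P d ∧ ∀ m' ∈ P d, m' ≠ m → ¬ R d m m'}

/-- The variable inclusion domination relation: `m2` extends `m1`. -/
def varIncRel {V : Type} (m1 m2 : Mapping V) : Prop :=
  ∀ x s, m1 x = some s → m2 x = some s

/-- Two mappings have the same domain. -/
def sameDom {V : Type} (m1 m2 : Mapping V) : Prop :=
  ∀ x, m1 x = none ↔ m2 x = none

/-- The span inclusion domination relation. -/
def spanIncRel {V : Type} (m1 m2 : Mapping V) : Prop :=
  sameDom m1 m2 ∧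
    ∀ x s1 s2, m1 x = some s1 → m2 x = some s2 → s2.1 ≤ s1.1 ∧ s1.2 ≤ s2.2

/-- The left-to-right domination relation: same start, `m2` no shorter. -/
def ltrRel {V : Type} (m1 m2 : Mapping V) : Prop :=
  sameDom m1 m2 ∧
    ∀ x s1 s2, m1 x = some s1 → m2 x = some s2 →
      s1.1 = s2.1 ∧ s1.2 - s1.1 ≤ s2.2 - s2.1

/-- The span length domination relation: `m2`'s spans are no shorter. -/
def spanLenRel {V : Type} (m1 m2 : Mapping V) : Prop :=
  sameDom m1 m2 ∧
    ∀ x s1 s2, m1 x = some s1 → m2 x = some s2 → s1.2 - s1.1 ≤ s2.2 - s2.1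


/-- The relation on span-or-undefined values defined by a single-variable domination
rule on variables `{x, x†}` (encoded as `Unit ⊕ Unit`, left = `x`, right = `x†`). -/
def pairRel {α : Type} (D : Spanner α (Unit ⊕ Unit)) (d : List α)
    (v1 v2 : Option Span) : Prop :=
  ∃ m ∈ D d, m (Sum.inl ()) = v1 ∧ m (Sum.inr ()) = v2

/-- `D` is a single-variable domination rule: on every document, `pairRel` is a partial
order on span-or-undefined values of the document. -/
def IsSingleVarDomRule {α : Type} (D : Spanner α (Unit ⊕ Unit)) : Prop :=
  ∀ d : List α,
    (∀ v : Option Span, (∀ s, v = some s → IsSpanOf d s) → pairRel D d v v) ∧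
    (∀ v1 v2 v3, pairRel D d v1 v2 → pairRel D d v2 v3 → pairRel D d v1 v3) ∧
    (∀ v1 v2, pairRel D d v1 v2 → pairRel D d v2 v1 → v1 = v2)

/-- The smallest span containing the defined components of a pair (the undefined value
`−` is contained in every span). -/
def pairHull : Option Span → Option Span → Span
  | some s1, some s2 => (min s1.1 s2.1, max s1.2 s2.2)
  | some s1, none => s1
  | none, some s2 => s2
  | none, none => (0, 0)

/-- Two spans are disjoint: no span of positive length is included in both. -/
def SpansDisjoint (s s' : Span) : Prop := min s.2 s'.2 ≤ max s.1 s'.1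

/-- Two strict domination pairs are disjoint if their hulls are disjoint. -/
def PairsDisjoint (p p' : Option Span × Option Span) : Prop :=
  SpansDisjoint (pairHull p.1 p.2) (pairHull p'.1 p'.2)

/-- Translating a span-or-undefined value by an offset. -/
def shiftOpt (o : ℕ) : Option Span → Option Span :=
  Option.map fun s => (s.1 + o, s.2 + o)

/-- `D` admits `n` pairwise disjoint strict domination pairs on `d`. -/
def HasDisjointStrictPairs {α : Type} (D : Spanner α (Unit ⊕ Unit)) (d : List α)
    (n : ℕ) : Prop :=
  ∃ f : Fin n → Option Span × Option Span,
    (∀ i, pairRel D d (f i).1 (f i).2 ∧ (f i).1 ≠ (f i).2) ∧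
    (∀ i j, i ≠ j → PairsDisjoint (f i) (f j))

/-!
A strict pair whose hull is empty is an empty span paired with `−`; it repeats in place with
`v = []`. Otherwise the hulls of disjoint strict pairs are consecutive intervals `[a i, b i⟩`, each
realised by an accepting run of the automaton. Colour `i < j` by the states of run `j` at `a i` and
of run `i` at `a j`; Ramsey's theorem yields five runs `J < K < L < M < O` of one colour `(p, q)`.
Let `v` be the factor of the document between `a K` and `a M`. Run `O`, whose pair lies to the
right, reads the prefix to `p` and loops `p → p` on `v` without markers; run `L` reads `v` from `p`
to `q` while placing its pair; run `J`, whose pair lies to the left, loops `q → q` on `v` and then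
accepts the suffix. Gluing these pieces places a copy of `L`'s pair in any chosen copy of `v` in
`u v^n w`.
-/

lemma take_append_slice_append_drop {β : Type} (l : List β) {t t' : ℕ} (h : t ≤ t') :
    l.take t ++ ((l.take t').drop t ++ l.drop t') = l := by
  calc l.take t ++ ((l.take t').drop t ++ l.drop t')
      = (l.take t').take t ++ (l.take t').drop t ++ l.drop t' := by
        rw [List.take_take, min_eq_left h, List.append_assoc]
    _ = l := by rw [List.take_append_drop, List.take_append_drop]

section RefWords

variable {α V : Type}

@[simp] lemma letters_nil : letters ([] : List (Label α V)) = [] := rfl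

@[simp] lemma letters_cons_letter (a : α) (W : List (Label α V)) :
    letters (Label.letter a :: W) = a :: letters W := rfl

@[simp] lemma letters_cons_vopen (x : V) (W : List (Label α V)) :
    letters (Label.vopen x :: W) = letters W := rfl

@[simp] lemma letters_cons_vclose (x : V) (W : List (Label α V)) :
    letters (Label.vclose x :: W) = letters W := rfl

@[simp] lemma letters_append (W W' : List (Label α V)) :
    letters (W ++ W') = letters W ++ letters W' :=
  List.filterMap_append

@[simp] lemma letters_flatten_replicate (W : List (Label α V)) (n : ℕ) :
    letters (List.replicate n W).flatten = (List.replicate n (letters W)).flatten := by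
  induction n with
  | zero => rfl
  | succ n ih => simp [List.replicate_succ, ih]

/-- The position in `W` after its `k`-th letter and all markers that follow it (the end of `W` if
it has fewer letters). Cutting to the right of those markers keeps a marker read at letter
position `k` on the left, which matters when one hull ends where the next one starts. -/
def cut : List (Label α V) → ℕ → ℕ
  | [], _ => 0
  | Label.letter _ :: _, 0 => 0
  | Label.letter _ :: W, k + 1 => cut W k + 1
  | Label.vopen _ :: W, k => cut W k + 1
  | Label.vclose _ :: W, k => cut W k + 1

lemma cut_le_length (W : List (Label α V)) (k : ℕ) : cut W k ≤ W.length := by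
  induction W generalizing k with
  | nil => simp [cut]
  | cons l W ih => cases l <;> cases k <;> simp [cut, ih]

lemma cut_mono (W : List (Label α V)) : Monotone (cut W) := by
  intro k k' hk
  induction W generalizing k k' with
  | nil => simp [cut]
  | cons l W ih =>
    cases l <;> cases k <;> cases k' <;> simp_all [cut]

lemma letters_take_cut (W : List (Label α V)) (k : ℕ) :
    letters (W.take (cut W k)) = (letters W).take k := by
  induction W generalizing k with
  | nil => simp [cut]
  | cons l W ih => cases l <;> cases k <;> simp [cut, ih]

lemma letters_slice_cut (W : List (Label α V)) (k k' : ℕ) :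
    letters ((W.take (cut W k')).drop (cut W k)) = ((letters W).take k').drop k := by
  induction W generalizing k k' with
  | nil => simp [cut]
  | cons l W ih => cases l <;> cases k <;> cases k' <;> simp [cut, ih, letters_take_cut]

def Markerless (W : List (Label α V)) : Prop :=
  ∀ x, Label.vopen x ∉ W ∧ Label.vclose x ∉ W

lemma Markerless.mono {W W' : List (Label α V)} (h : Markerless W) (hW' : W' ⊆ W) :
    Markerless W' :=
  fun x => ⟨fun hx => (h x).1 (hW' hx), fun hx => (h x).2 (hW' hx)⟩

lemma Markerless.append {W W' : List (Label α V)} (h : Markerless W) (h' : Markerless W') :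
    Markerless (W ++ W') :=
  fun x => by simp [(h x).1, (h x).2, (h' x).1, (h' x).2]

lemma Markerless.flatten_replicate {W : List (Label α V)} (h : Markerless W) (n : ℕ) :
    Markerless (List.replicate n W).flatten :=
  h.mono fun l hl => by
    obtain ⟨W', hW', hl⟩ := List.mem_flatten.1 hl
    rwa [List.eq_of_mem_replicate hW'] at hl

variable [DecidableEq α] [DecidableEq V]

def labelPos (W : List (Label α V)) (l : Label α V) : ℕ :=
  (letters (W.take (W.idxOf l))).length

lemma labelPos_cons (m l : Label α V) (W : List (Label α V)) :
    labelPos (m :: W) l = if m = l then 0 else labelPos W l + (letters [m]).length := by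
  by_cases h : m = l
  · simp [labelPos, h]
  · cases m <;> simp [labelPos, h]

lemma labelPos_le_of_mem_take_cut {W : List (Label α V)} {k : ℕ} {l : Label α V}
    (h : l ∈ W.take (cut W k)) : labelPos W l ≤ k := by
  induction W generalizing k with
  | nil => simp at h
  | cons m W ih =>
    rw [labelPos_cons]
    split_ifs with hml
    · omega
    cases m <;> cases k <;> simp only [cut, List.take_zero, List.take_succ_cons,
      List.not_mem_nil, List.mem_cons] at h <;>
      rcases h with rfl | h <;> simp_all

lemma lt_labelPos_of_mem_drop_cut {W : List (Label α V)} {k : ℕ} {l : Label α V}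
    (hl : ∀ a, l ≠ Label.letter a) (hd : l ∈ W.drop (cut W k)) (ht : l ∉ W.take (cut W k)) :
    k < labelPos W l := by
  induction W generalizing k with
  | nil => simp at hd
  | cons m W ih =>
    have hml : m ≠ l := by rintro rfl; cases m <;> simp_all [cut]
    rw [labelPos_cons, if_neg hml]
    cases m <;> cases k <;> simp_all [cut]

lemma labelPos_mono {W : List (Label α V)} {l l' : Label α V} (h : W.idxOf l ≤ W.idxOf l') :
    labelPos W l ≤ labelPos W l' :=
  ((List.take_prefix_take_left h).filterMap _).length_le

lemma refMapping_of_vopen_mem {W : List (Label α V)} {x : V} (h : Label.vopen x ∈ W) :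
    refMapping W x = some (labelPos W (Label.vopen x), labelPos W (Label.vclose x)) := by
  simp [refMapping, labelPos, h]

lemma ValidRef.vclose_mem {W : List (Label α V)} (hW : ValidRef W) {x : V}
    (h : Label.vopen x ∈ W) : Label.vclose x ∈ W := by
  rcases hW x with ⟨ho, -⟩ | ⟨-, hc, -⟩
  · exact absurd h ho
  · exact List.count_pos_iff.1 (by omega)

lemma ValidRef.exists_refMapping_of_mem {W : List (Label α V)} (hW : ValidRef W) {x : V}
    {l : Label α V} (hl : l = Label.vopen x ∨ l = Label.vclose x) (hmem : l ∈ W) :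
    W.count l = 1 ∧ ∃ s, refMapping W x = some s ∧ s.1 ≤ labelPos W l ∧ labelPos W l ≤ s.2 := by
  rcases hW x with ⟨ho, hc⟩ | ⟨ho, hc, hlt⟩
  · rcases hl with rfl | rfl <;> contradiction
  have hopen : Label.vopen x ∈ W := List.count_pos_iff.1 (by omega)
  refine ⟨by rcases hl with rfl | rfl <;> assumption, _, refMapping_of_vopen_mem hopen, ?_⟩
  have := labelPos_mono hlt.le
  rcases hl with rfl | rfl <;> simp [this]

lemma refMapping_isSpanOf {W : List (Label α V)} (hW : ValidRef W) {x : V} {s : Span}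
    (h : refMapping W x = some s) : IsSpanOf (letters W) s := by
  have hopen : Label.vopen x ∈ W := by
    by_contra hx
    simp [refMapping, hx] at h
  obtain ⟨-, s', hs', h1, h2⟩ := hW.exists_refMapping_of_mem (Or.inl rfl) hopen
  obtain rfl : s = s' := Option.some.inj (h.symm.trans hs')
  rw [refMapping_of_vopen_mem hopen, Option.some.injEq] at hs'
  refine ⟨h1.trans h2, ?_⟩
  rw [← hs']
  exact ((List.take_prefix _ _).filterMap _).length_le

lemma markerless_take_cut {W : List (Label α V)} (hW : ValidRef W) {k : ℕ}
    (h : ∀ x s, refMapping W x = some s → k < s.1) : Markerless (W.take (cut W k)) := by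
  have key : ∀ x l, (l = Label.vopen x ∨ l = Label.vclose x) → l ∉ W.take (cut W k) := by
    intro x l hl hmem
    obtain ⟨-, s, hs, h1, -⟩ := hW.exists_refMapping_of_mem hl (List.mem_of_mem_take hmem)
    have := labelPos_le_of_mem_take_cut hmem
    have := h x s hs
    omega
  exact fun x => ⟨key x _ (Or.inl rfl), key x _ (Or.inr rfl)⟩

lemma markerless_drop_cut {W : List (Label α V)} (hW : ValidRef W) {k : ℕ}
    (h : ∀ x s, refMapping W x = some s → s.2 ≤ k) : Markerless (W.drop (cut W k)) := by
  have key : ∀ x l, (l = Label.vopen x ∨ l = Label.vclose x) → l ∉ W.drop (cut W k) := by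
    intro x l hl hmem
    obtain ⟨hcount, s, hs, -, h2⟩ := hW.exists_refMapping_of_mem hl (List.mem_of_mem_drop hmem)
    have hnot : l ∉ W.take (cut W k) := by
      intro htake
      have := List.count_pos_iff.2 htake
      have := List.count_pos_iff.2 hmem
      rw [← List.take_append_drop (cut W k) W, List.count_append] at hcount
      omega
    have := lt_labelPos_of_mem_drop_cut (by rcases hl with rfl | rfl <;> simp) hmem hnot
    have := h x s hs
    omega
  exact fun x => ⟨key x _ (Or.inl rfl), key x _ (Or.inr rfl)⟩

lemma ValidRef.of_markerless_append {P W : List (Label α V)} (hP : Markerless P)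
    (h : ValidRef (P ++ W)) : ValidRef W := by
  intro x
  rcases h x with ⟨ho, hc⟩ | ⟨ho, hc, hlt⟩
  · exact Or.inl ⟨fun h => ho (by simp [h]), fun h => hc (by simp [h])⟩
  · right
    rw [List.idxOf_append_of_notMem (hP x).1, List.idxOf_append_of_notMem (hP x).2] at hlt
    simp only [List.count_append, List.count_eq_zero.2 (hP x).1,
      List.count_eq_zero.2 (hP x).2, zero_add] at ho hc
    exact ⟨ho, hc, by omega⟩

lemma ValidRef.of_append_markerless {W S : List (Label α V)} (hS : Markerless S)
    (h : ValidRef (W ++ S)) : ValidRef W := by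
  intro x
  rcases h x with ⟨ho, hc⟩ | ⟨ho, hc, hlt⟩
  · exact Or.inl ⟨fun h => ho (by simp [h]), fun h => hc (by simp [h])⟩
  · right
    simp only [List.count_append, List.count_eq_zero.2 (hS x).1,
      List.count_eq_zero.2 (hS x).2, add_zero] at ho hc
    rw [List.idxOf_append_of_mem (List.count_pos_iff.1 (by omega)),
      List.idxOf_append_of_mem (List.count_pos_iff.1 (by omega))] at hlt
    exact ⟨ho, hc, hlt⟩

lemma refMapping_markerless_append {P : List (Label α V)} (hP : Markerless P)
    (W : List (Label α V)) (x : V) :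
    refMapping (P ++ W) x = shiftOpt (letters P).length (refMapping W x) := by
  by_cases h : Label.vopen x ∈ W
  · simp [refMapping, h, List.idxOf_append_of_notMem (hP x).1,
      List.idxOf_append_of_notMem (hP x).2, List.take_length_add_append, shiftOpt, add_comm]
  · simp [refMapping, h, (hP x).1, shiftOpt]

lemma refMapping_append_markerless {W S : List (Label α V)} (hS : Markerless S)
    (hW : ValidRef W) (x : V) : refMapping (W ++ S) x = refMapping W x := by
  by_cases h : Label.vopen x ∈ W
  · simp [refMapping, h, List.idxOf_append_of_mem, hW.vclose_mem h,
      List.take_append_of_le_length List.idxOf_le_length]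
  · simp [refMapping, h, (hS x).1]

lemma refMapping_markerless_append_append {P W S : List (Label α V)} (hP : Markerless P)
    (hS : Markerless S) (h : ValidRef (P ++ (W ++ S))) :
    ValidRef W ∧
      ∀ x, refMapping (P ++ (W ++ S)) x = shiftOpt (letters P).length (refMapping W x) := by
  have hW := (h.of_markerless_append hP).of_append_markerless hS
  exact ⟨hW, fun x => by rw [refMapping_markerless_append hP, refMapping_append_markerless hS hW]⟩

end RefWords

namespace VA

variable {α V Q : Type} {A : VA α V Q}

lemma Path.append {p q r : Q} {W W' : List (Label α V)} (h : A.Path p W q)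
    (h' : A.Path q W' r) : A.Path p (W ++ W') r := by
  induction h with
  | nil => exact h'
  | cons ht _ ih => exact .cons ht (ih h')

lemma Path.flatten_replicate {p : Q} {W : List (Label α V)} (h : A.Path p W p) (n : ℕ) :
    A.Path p (List.replicate n W).flatten p := by
  induction n with
  | zero => exact .nil p
  | succ n ih => simpa [List.replicate_succ] using h.append ih

lemma Path.exists_states {p q : Q} {W : List (Label α V)} (h : A.Path p W q) :
    ∃ ρ : ℕ → Q, ρ 0 = p ∧ ρ W.length = q ∧
      ∀ t t', t ≤ t' → t' ≤ W.length → A.Path (ρ t) ((W.take t').drop t) (ρ t') := by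
  induction h with
  | nil q => exact ⟨fun _ => q, rfl, rfl, fun t t' _ _ => by simp [List.take_nil, Path.nil]⟩
  | @cons p p' q l W ht _ ih =>
    obtain ⟨ρ, h0, hlen, hseg⟩ := ih
    refine ⟨fun t => if t = 0 then p else ρ (t - 1), rfl, by simpa using hlen, ?_⟩
    rintro (_ | t) (_ | t') htt' ht'
    · exact .nil p
    · have hW := hseg 0 t' (Nat.zero_le _) (by simpa using ht')
      rw [h0] at hW
      simpa using Path.cons ht hW
    · omega
    · simpa using hseg t t' (by omega) (by simpa using ht')

structure AcceptingRun (A : VA α V Q) where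
  word : List (Label α V)
  state : ℕ → Q
  state_zero : state 0 = A.init
  state_length : state word.length ∈ A.final
  path : ∀ t t', t ≤ t' → t' ≤ word.length → A.Path (state t) ((word.take t').drop t) (state t')

lemma AcceptsRef.exists_run {W : List (Label α V)} (h : A.AcceptsRef W) :
    ∃ r : A.AcceptingRun, r.word = W := by
  obtain ⟨qf, hqf, hpath⟩ := h
  obtain ⟨ρ, h0, hlen, hseg⟩ := hpath.exists_states
  exact ⟨⟨W, ρ, h0, hlen ▸ hqf, hseg⟩, rfl⟩

namespace AcceptingRun

variable (r : A.AcceptingRun)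

lemma acceptsRef : A.AcceptsRef r.word :=
  ⟨_, r.state_length, by simpa [r.state_zero] using r.path 0 r.word.length (Nat.zero_le _) le_rfl⟩

def stateAt (k : ℕ) : Q := r.state (cut r.word k)

lemma path_take (k : ℕ) : A.Path A.init (r.word.take (cut r.word k)) (r.stateAt k) := by
  simpa [stateAt, r.state_zero] using r.path 0 _ (Nat.zero_le _) (cut_le_length _ k)

lemma path_slice {k k' : ℕ} (hk : k ≤ k') :
    A.Path (r.stateAt k) ((r.word.take (cut r.word k')).drop (cut r.word k)) (r.stateAt k') :=
  r.path _ _ (cut_mono _ hk) (cut_le_length _ k')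

lemma path_drop (k : ℕ) :
    A.Path (r.stateAt k) (r.word.drop (cut r.word k)) (r.state r.word.length) := by
  simpa [stateAt] using r.path _ _ (cut_le_length _ k) le_rfl

end AcceptingRun

end VA

section Ramsey

variable {ι C : Type} [LinearOrder ι] [Fintype C] [Nonempty C]

lemma exists_strictMono_color_eq (f : ι → ι → C) (t : ℕ) (S : Finset ι)
    (h : (Fintype.card C + 1) ^ t ≤ S.card) :
    ∃ (x : Fin t → ι) (c : Fin t → C), StrictMono x ∧ (∀ i, x i ∈ S) ∧
      ∀ i j, i < j → f (x i) (x j) = c i := by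
  classical
  induction t generalizing S with
  | zero => exact ⟨Fin.elim0, Fin.elim0, fun i => i.elim0, fun i => i.elim0, fun i => i.elim0⟩
  | succ t ih =>
    have hpow : 1 ≤ (Fintype.card C + 1) ^ t := Nat.one_le_pow _ _ (Nat.succ_pos _)
    have hS : S.Nonempty := Finset.card_pos.1 (by rw [pow_succ] at h; nlinarith)
    set x₀ := S.min' hS
    obtain ⟨c₀, -, hc₀⟩ := Finset.exists_le_card_fiber_of_mul_le_card_of_maps_to
      (s := S.erase x₀) (f := f x₀) (fun _ _ => Finset.mem_univ _) Finset.univ_nonempty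
      (n := (Fintype.card C + 1) ^ t) (by
        rw [Finset.card_univ, Finset.card_erase_of_mem (S.min'_mem hS)]
        apply Nat.le_sub_one_of_lt
        rw [pow_succ] at h
        nlinarith)
    obtain ⟨x, c, hx, hxT, hc⟩ := ih _ hc₀
    have hxT' : ∀ i, x i ∈ S.erase x₀ ∧ f x₀ (x i) = c₀ := fun i => Finset.mem_filter.1 (hxT i)
    refine ⟨Fin.cons x₀ x, Fin.cons c₀ c,
      Fin.strictMono_cons.2 ⟨fun j => S.min'_lt_of_mem_erase_min' hS (hxT' j).1, hx⟩, ?_, ?_⟩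
    · intro i
      cases i using Fin.cases with
      | zero => exact S.min'_mem hS
      | succ i => exact Finset.mem_of_mem_erase (hxT' i).1
    · intro i j hij
      cases i using Fin.cases <;> cases j using Fin.cases
      · exact absurd hij (lt_irrefl _)
      · exact (hxT' _).2
      · exact absurd hij (Fin.succ_pos _).not_gt
      · exact hc _ _ (Fin.succ_lt_succ_iff.1 hij)

theorem exists_monochromatic (f : ι → ι → C) (m : ℕ) (S : Finset ι)
    (h : (Fintype.card C + 1) ^ (m * Fintype.card C + 1) ≤ S.card) :
    ∃ x : Fin m → ι, StrictMono x ∧ (∀ i, x i ∈ S) ∧ ∃ c, ∀ i j, i < j → f (x i) (x j) = c := by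
  classical
  obtain ⟨x, c, hx, hxS, hc⟩ := exists_strictMono_color_eq f _ S h
  obtain ⟨c₀, -, hc₀⟩ := Finset.exists_lt_card_fiber_of_mul_lt_card_of_maps_to
    (s := Finset.univ) (f := c) (n := m) (fun _ _ => Finset.mem_univ _)
    (by simp [mul_comm])
  set F := Finset.univ.filter fun i => c i = c₀
  let e : Fin m ↪o Fin (m * Fintype.card C + 1) :=
    (Fin.castLEOrderEmb hc₀.le).trans (F.orderEmbOfFin rfl)
  have he : ∀ i, c (e i) = c₀ := fun i => (Finset.mem_filter.1 (F.orderEmbOfFin_mem rfl _)).2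
  exact ⟨x ∘ e, hx.comp e.strictMono, fun i => hxS _, c₀,
    fun i j hij => (hc _ _ (e.strictMono hij)).trans (he i)⟩

end Ramsey

section Pairs

lemma shiftOpt_injective (o : ℕ) : Function.Injective (shiftOpt o) :=
  Option.map_injective fun s t h => by
    simp only [Prod.mk.injEq, add_left_inj] at h
    exact Prod.ext h.1 h.2

lemma pairHull_le {p q : Option Span} {s : Span} (h : p = some s ∨ q = some s) :
    (pairHull p q).1 ≤ s.1 ∧ s.2 ≤ (pairHull p q).2 := by
  rcases h with rfl | rfl
  · cases q <;> simp [pairHull]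
  · cases p <;> simp [pairHull]

lemma pairHull_snd_le {p q : Option Span} {n : ℕ} (hp : ∀ s, p = some s → s.2 ≤ n)
    (hq : ∀ s, q = some s → s.2 ≤ n) : (pairHull p q).2 ≤ n := by
  cases p <;> cases q <;> simp_all [pairHull]

lemma pairHull_shiftOpt (o : ℕ) {p q : Option Span} (h : p ≠ q) :
    pairHull (shiftOpt o p) (shiftOpt o q) = ((pairHull p q).1 + o, (pairHull p q).2 + o) := by
  cases p <;> cases q <;> simp_all [pairHull, shiftOpt, min_add_add_right, max_add_add_right]

lemma pairsDisjoint_shiftOpt {p q : Option Span} (h : p ≠ q) {ℓ o o' : ℕ}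
    (hℓ : (pairHull p q).2 ≤ ℓ) (ho : o + ℓ ≤ o') :
    PairsDisjoint (shiftOpt o p, shiftOpt o q) (shiftOpt o' p, shiftOpt o' q) ∧
      PairsDisjoint (shiftOpt o' p, shiftOpt o' q) (shiftOpt o p, shiftOpt o q) := by
  simp only [PairsDisjoint, SpansDisjoint, pairHull_shiftOpt _ h]
  omega

variable {α : Type}

def PumpsDisjointStrictPairs (D : Spanner α (Unit ⊕ Unit)) (u v w : List α)
    (s1 s2 : Option Span) : Prop :=
  s1 ≠ s2 ∧
    (∀ s, s1 = some s → s.1 ≤ s.2 ∧ s.2 ≤ v.length) ∧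
    (∀ s, s2 = some s → s.1 ≤ s.2 ∧ s.2 ≤ v.length) ∧
    ∀ n : ℕ, 1 ≤ n →
      (∀ i : Fin n,
          pairRel D (u ++ (List.replicate n v).flatten ++ w)
            (shiftOpt (u.length + i.1 * v.length) s1)
            (shiftOpt (u.length + i.1 * v.length) s2) ∧
          shiftOpt (u.length + i.1 * v.length) s1 ≠
            shiftOpt (u.length + i.1 * v.length) s2) ∧
      (∀ i j : Fin n, i ≠ j →
          PairsDisjoint
            (shiftOpt (u.length + i.1 * v.length) s1,
             shiftOpt (u.length + i.1 * v.length) s2)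
            (shiftOpt (u.length + j.1 * v.length) s1,
             shiftOpt (u.length + j.1 * v.length) s2))

lemma pumpsDisjointStrictPairs_nil {D : Spanner α (Unit ⊕ Unit)} {d : List α} {c : ℕ}
    (hc : c ≤ d.length) {p q : Option Span} (hpq : p ≠ q) (hp : p = none ∨ p = some (0, 0))
    (hq : q = none ∨ q = some (0, 0)) (h : pairRel D d (shiftOpt c p) (shiftOpt c q)) :
    PumpsDisjointStrictPairs D (d.take c) [] (d.drop c) p q := by
  have hlen : (d.take c).length = c := by simp [hc]
  refine ⟨hpq, ?_, ?_, fun n _ => ⟨fun i => ?_, fun i j _ => ?_⟩⟩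
  · rcases hp with rfl | rfl <;> simp
  · rcases hq with rfl | rfl <;> simp
  · simpa [hlen] using ⟨h, (shiftOpt_injective c).ne hpq⟩
  · rcases hp with rfl | rfl <;> rcases hq with rfl | rfl <;>
      simp_all [PairsDisjoint, SpansDisjoint, pairHull, shiftOpt]

lemma exists_pumps_of_pairHull_le {D : Spanner α (Unit ⊕ Unit)} {d : List α} {p q : Option Span}
    (hp : ∀ s, p = some s → IsSpanOf d s) (hq : ∀ s, q = some s → IsSpanOf d s)
    (h : pairRel D d p q) (hpq : p ≠ q) (hhull : (pairHull p q).2 ≤ (pairHull p q).1) :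
    ∃ u v w s1 s2, PumpsDisjointStrictPairs D u v w s1 s2 := by
  rcases p with _ | ⟨c, c'⟩ <;> rcases q with _ | ⟨e, e'⟩
  · exact absurd rfl hpq
  · obtain ⟨he', he⟩ := hq _ rfl
    obtain rfl : e' = e := by simp [pairHull] at hhull; omega
    exact ⟨_, _, _, _, _, pumpsDisjointStrictPairs_nil he (p := none) (q := some (0, 0))
      (by simp) (.inl rfl) (.inr rfl) (by simpa [shiftOpt] using h)⟩
  · obtain ⟨hc', hc⟩ := hp _ rfl
    obtain rfl : c' = c := by simp [pairHull] at hhull; omega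
    exact ⟨_, _, _, _, _, pumpsDisjointStrictPairs_nil hc (p := some (0, 0)) (q := none)
      (by simp) (.inr rfl) (.inl rfl) (by simpa [shiftOpt] using h)⟩
  · obtain ⟨hc', -⟩ := hp _ rfl
    obtain ⟨he', -⟩ := hq _ rfl
    simp only [pairHull] at hhull
    exact absurd (by simp only [Option.some.injEq, Prod.mk.injEq]; omega) hpq

lemma exists_sorted_disjointStrictPairs {D : Spanner α (Unit ⊕ Unit)} {d : List α} {N : ℕ}
    (hpos : ∀ p q, pairRel D d p q → p ≠ q → (pairHull p q).1 < (pairHull p q).2)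
    (h : HasDisjointStrictPairs D d N) :
    ∃ f : Fin N → Option Span × Option Span,
      (∀ i, pairRel D d (f i).1 (f i).2 ∧ (f i).1 ≠ (f i).2) ∧
      ∀ i j, i < j → (pairHull (f i).1 (f i).2).2 ≤ (pairHull (f j).1 (f j).2).1 := by
  obtain ⟨f, hf, hdisj⟩ := h
  let σ := Tuple.sort fun i => (pairHull (f i).1 (f i).2).1
  refine ⟨f ∘ σ, fun i => hf (σ i), fun i j hij => ?_⟩
  have hsorted : (pairHull (f (σ i)).1 (f (σ i)).2).1 ≤ (pairHull (f (σ j)).1 (f (σ j)).2).1 :=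
    Tuple.monotone_sort (fun i => (pairHull (f i).1 (f i).2).1) hij.le
  have hij' := hdisj _ _ (σ.injective.ne hij.ne)
  have := hpos _ _ (hf (σ j)).1 (hf (σ j)).2
  simp only [PairsDisjoint, SpansDisjoint, Function.comp_apply] at hij' ⊢
  omega

end Pairs

section Pumping

variable {α Q : Type} [DecidableEq α] {A : VA α (Unit ⊕ Unit) Q}

lemma pumps_of_loops (hseq : A.Sequential) {p q qf : Q} (hqf : qf ∈ A.final)
    {U V₀ V V₁ S : List (Label α (Unit ⊕ Unit))}
    (hU : A.Path A.init U p) (hV₀ : A.Path p V₀ p) (hV : A.Path p V q)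
    (hV₁ : A.Path q V₁ q) (hS : A.Path q S qf)
    (hmU : Markerless U) (hmV₀ : Markerless V₀) (hmV₁ : Markerless V₁) (hmS : Markerless S)
    (hlV₀ : letters V₀ = letters V) (hlV₁ : letters V₁ = letters V)
    (hne : refMapping V (Sum.inl ()) ≠ refMapping V (Sum.inr ())) :
    PumpsDisjointStrictPairs A.spanner (letters U) (letters V) (letters S)
      (refMapping V (Sum.inl ())) (refMapping V (Sum.inr ())) := by
  have pumped : ∀ i j : ℕ, ValidRef V ∧
      pairRel A.spanner
        (letters U ++ (List.replicate (i + 1 + j) (letters V)).flatten ++ letters S)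
        (shiftOpt ((letters U).length + i * (letters V).length) (refMapping V (Sum.inl ())))
        (shiftOpt ((letters U).length + i * (letters V).length) (refMapping V (Sum.inr ()))) := by
    intro i j
    have hacc : A.AcceptsRef ((U ++ (List.replicate i V₀).flatten) ++
        (V ++ ((List.replicate j V₁).flatten ++ S))) :=
      ⟨qf, hqf, (hU.append (hV₀.flatten_replicate i)).append
        (hV.append ((hV₁.flatten_replicate j).append hS))⟩
    obtain ⟨hvalid, hmap⟩ := refMapping_markerless_append_append
      (hmU.append (hmV₀.flatten_replicate i)) ((hmV₁.flatten_replicate j).append hmS)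
      (hseq _ hacc)
    refine ⟨hvalid, _, ⟨_, hacc, ?_, rfl⟩, ?_, ?_⟩
    · simp [hlV₀, hlV₁, List.replicate_add]
    all_goals rw [hmap]; simp [hlV₀]
  have hspan : ∀ x s, refMapping V x = some s → s.1 ≤ s.2 ∧ s.2 ≤ (letters V).length :=
    fun x s hs => refMapping_isSpanOf (pumped 0 0).1 hs
  refine ⟨hne, hspan _, hspan _, fun n hn =>
    ⟨fun i => ⟨?_, (shiftOpt_injective _).ne hne⟩, fun i j hij => ?_⟩⟩
  · simpa [show i.1 + 1 + (n - 1 - i.1) = n by omega] using (pumped i (n - 1 - i)).2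
  · have hℓ := pairHull_snd_le (fun s hs => (hspan (.inl ()) s hs).2)
      (fun s hs => (hspan (.inr ()) s hs).2)
    rcases lt_or_gt_of_ne (Fin.val_ne_of_ne hij) with h | h
    · exact (pairsDisjoint_shiftOpt hne hℓ (by nlinarith)).1
    · exact (pairsDisjoint_shiftOpt hne hℓ (by nlinarith)).2

lemma pumps_of_cut_states (hseq : A.Sequential) {rJ rL rO : A.AcceptingRun} {k k' : ℕ}
    (hk : k ≤ k') (hJ : letters rJ.word = letters rL.word) (hO : letters rO.word = letters rL.word)
    (hmJ : ∀ x s, refMapping rJ.word x = some s → s.2 ≤ k)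
    (hmL : ∀ x s, refMapping rL.word x = some s → k < s.1 ∧ s.2 ≤ k')
    (hmO : ∀ x s, refMapping rO.word x = some s → k' < s.1)
    (hne : refMapping rL.word (Sum.inl ()) ≠ refMapping rL.word (Sum.inr ()))
    (hp : rO.stateAt k = rL.stateAt k) (hp' : rO.stateAt k' = rL.stateAt k)
    (hq : rJ.stateAt k = rL.stateAt k') (hq' : rJ.stateAt k' = rL.stateAt k') :
    ∃ u v w s1 s2, PumpsDisjointStrictPairs A.spanner u v w s1 s2 := by
  have hvL := hseq _ rL.acceptsRef
  have hmO' := markerless_take_cut (hseq _ rO.acceptsRef) hmO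
  have hmJ' := markerless_drop_cut (hseq _ rJ.acceptsRef) hmJ
  have hdec := take_append_slice_append_drop rL.word (cut_mono rL.word hk)
  obtain ⟨-, hmap⟩ := refMapping_markerless_append_append
    (markerless_take_cut hvL fun x s hs => (hmL x s hs).1)
    (markerless_drop_cut hvL fun x s hs => (hmL x s hs).2) (hdec.symm ▸ hvL)
  rw [hdec] at hmap
  refine ⟨_, _, _, _, _, pumps_of_loops hseq rJ.state_length (hp ▸ rO.path_take k)
    (hp ▸ hp' ▸ rO.path_slice hk) (rL.path_slice hk) (hq ▸ hq' ▸ rJ.path_slice hk)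
    (hq' ▸ rJ.path_drop k') (hmO'.mono (List.take_prefix_take_left (cut_mono _ hk)).subset)
    (hmO'.mono (List.drop_subset _ _))
    (hmJ'.mono (by rw [List.drop_take]; exact List.take_subset _ _))
    (markerless_drop_cut (hseq _ rJ.acceptsRef) fun x s hs => (hmJ x s hs).trans hk)
    (by rw [letters_slice_cut, letters_slice_cut, hO])
    (by rw [letters_slice_cut, letters_slice_cut, hJ]) fun h => hne ?_⟩
  rw [hmap, hmap, h]

end Pumping

section Spanner

variable {α Q : Type} [DecidableEq α] {A : VA α (Unit ⊕ Unit) Q}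

lemma exists_run_of_pairRel {d : List α} {p q : Option Span} (h : pairRel A.spanner d p q) :
    ∃ r : A.AcceptingRun, letters r.word = d ∧
      refMapping r.word (Sum.inl ()) = p ∧ refMapping r.word (Sum.inr ()) = q := by
  obtain ⟨_, ⟨W, hacc, hlet, rfl⟩, hp, hq⟩ := h
  obtain ⟨r, rfl⟩ := hacc.exists_run
  exact ⟨r, hlet, hp, hq⟩

lemma pairRel_isSpanOf (hseq : A.Sequential) {d : List α} {p q : Option Span}
    (h : pairRel A.spanner d p q) :
    (∀ s, p = some s → IsSpanOf d s) ∧ (∀ s, q = some s → IsSpanOf d s) := by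
  obtain ⟨_, ⟨W, hacc, rfl, rfl⟩, rfl, rfl⟩ := h
  exact ⟨fun s hs => refMapping_isSpanOf (hseq _ hacc) hs,
    fun s hs => refMapping_isSpanOf (hseq _ hacc) hs⟩

lemma pumps_of_sorted_pairs [Fintype Q] (hseq : A.Sequential) {d : List α} {N : ℕ}
    (hN : (Fintype.card (Q × Q) + 1) ^ (5 * Fintype.card (Q × Q) + 1) ≤ N)
    (f : Fin N → Option Span × Option Span)
    (hf : ∀ i, pairRel A.spanner d (f i).1 (f i).2 ∧ (f i).1 ≠ (f i).2)
    (hpos : ∀ i, (pairHull (f i).1 (f i).2).1 < (pairHull (f i).1 (f i).2).2)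
    (hsep : ∀ i j, i < j → (pairHull (f i).1 (f i).2).2 ≤ (pairHull (f j).1 (f j).2).1) :
    ∃ u v w s1 s2, PumpsDisjointStrictPairs A.spanner u v w s1 s2 := by
  choose r hr using fun i => exists_run_of_pairRel (hf i).1
  set a := fun i => (pairHull (f i).1 (f i).2).1
  have hin : ∀ i x s, refMapping (r i).word x = some s →
      a i ≤ s.1 ∧ s.2 ≤ (pairHull (f i).1 (f i).2).2 := by
    rintro i (⟨⟩ | ⟨⟩) s hs
    · exact pairHull_le (.inl ((hr i).2.1 ▸ hs))
    · exact pairHull_le (.inr ((hr i).2.2 ▸ hs))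
  have : Nonempty (Q × Q) := ⟨(A.init, A.init)⟩
  obtain ⟨x, hx, -, c, hc⟩ := exists_monochromatic
    (fun i j => ((r j).stateAt (a i), (r i).stateAt (a j))) 5 Finset.univ (by simpa using hN)
  have hc' : ∀ i j, i < j →
      (r (x j)).stateAt (a (x i)) = c.1 ∧ (r (x i)).stateAt (a (x j)) = c.2 :=
    fun i j hij => Prod.ext_iff.1 (hc i j hij)
  have hleft : ∀ i j : Fin 5, i < j →
      ∀ y s, refMapping (r (x i)).word y = some s → s.2 ≤ a (x j) :=
    fun i j hij y s hs => (hin _ y s hs).2.trans (hsep _ _ (hx hij))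
  have hright : ∀ i j : Fin 5, i < j →
      ∀ y s, refMapping (r (x j)).word y = some s → a (x i) < s.1 :=
    fun i j hij y s hs => ((hpos _).trans_le (hsep _ _ (hx hij))).trans_le (hin _ y s hs).1
  exact pumps_of_cut_states hseq (rJ := r (x 0)) (rL := r (x 2)) (rO := r (x 4))
    ((hpos _).trans_le (hsep _ _ (hx (by decide : (1 : Fin 5) < 3)))).le
    ((hr _).1.trans (hr _).1.symm) ((hr _).1.trans (hr _).1.symm)
    (hleft 0 1 (by decide))
    (fun y s hs => ⟨hright 1 2 (by decide) y s hs, hleft 2 3 (by decide) y s hs⟩)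
    (hright 3 4 (by decide)) (by rw [(hr _).2.1, (hr _).2.2]; exact (hf _).2)
    ((hc' 1 4 (by decide)).1.trans (hc' 1 2 (by decide)).1.symm)
    ((hc' 3 4 (by decide)).1.trans (hc' 1 2 (by decide)).1.symm)
    ((hc' 0 1 (by decide)).2.trans (hc' 2 3 (by decide)).2.symm)
    ((hc' 0 3 (by decide)).2.trans (hc' 2 3 (by decide)).2.symm)

end Spanner

theorem umdsdp_pumping_general {α : Type} [DecidableEq α]
    (D : Spanner α (Unit ⊕ Unit)) (hreg : IsRegular D)
    (h : ∀ n : ℕ, ∃ d : List α, HasDisjointStrictPairs D d n) :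
    ∃ u v w : List α, ∃ s1 s2 : Option Span,
      s1 ≠ s2 ∧
      (∀ s, s1 = some s → s.1 ≤ s.2 ∧ s.2 ≤ v.length) ∧
      (∀ s, s2 = some s → s.1 ≤ s.2 ∧ s.2 ≤ v.length) ∧
      ∀ n : ℕ, 1 ≤ n →
        (∀ i : Fin n,
            pairRel D (u ++ (List.replicate n v).flatten ++ w)
              (shiftOpt (u.length + i.1 * v.length) s1)
              (shiftOpt (u.length + i.1 * v.length) s2) ∧
            shiftOpt (u.length + i.1 * v.length) s1 ≠
              shiftOpt (u.length + i.1 * v.length) s2) ∧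
        (∀ i j : Fin n, i ≠ j →
            PairsDisjoint
              (shiftOpt (u.length + i.1 * v.length) s1,
               shiftOpt (u.length + i.1 * v.length) s2)
              (shiftOpt (u.length + j.1 * v.length) s1,
               shiftOpt (u.length + j.1 * v.length) s2)) := by
  obtain ⟨Q, _, A, hseq, rfl⟩ := hreg
  by_cases hpos : ∀ d p q, pairRel A.spanner d p q → p ≠ q → (pairHull p q).1 < (pairHull p q).2
  · obtain ⟨d, hd⟩ := h ((Fintype.card (Q × Q) + 1) ^ (5 * Fintype.card (Q × Q) + 1))
    obtain ⟨f, hf, hsep⟩ := exists_sorted_disjointStrictPairs (hpos d) hd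
    exact pumps_of_sorted_pairs hseq le_rfl f hf (fun i => hpos d _ _ (hf i).1 (hf i).2) hsep
  · push Not at hpos
    obtain ⟨d, p, q, hrel, hpq, hhull⟩ := hpos
    obtain ⟨hp, hq⟩ := pairRel_isSpanOf hseq hrel
    exact exists_pumps_of_pairHull_le hp hq hrel hpq hhull

/-- If a single-variable domination rule `D` defined by a sequential
VA admits, for every `n`, a document with `n` pairwise disjoint strict domination pairs,
then there are words `u, v, w` and values `s1, s2` within `v` such that for every
`n ≥ 1` the document `u v^n w` admits `n` pairwise disjoint strict domination pairs of
`D`, one in each copy of `v`, obtained by translating `(s1, s2)`. -/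
theorem umdsdp_pumping {α : Type} [Fintype α] [DecidableEq α]
    (D : Spanner α (Unit ⊕ Unit)) (hreg : IsRegular D) (hrule : IsSingleVarDomRule D)
    (h : ∀ n : ℕ, ∃ d : List α, HasDisjointStrictPairs D d n) :
    ∃ u v w : List α, ∃ s1 s2 : Option Span,
      s1 ≠ s2 ∧
      (∀ s, s1 = some s → s.1 ≤ s.2 ∧ s.2 ≤ v.length) ∧
      (∀ s, s2 = some s → s.1 ≤ s.2 ∧ s.2 ≤ v.length) ∧
      ∀ n : ℕ, 1 ≤ n →
        (∀ i : Fin n,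
            pairRel D (u ++ (List.replicate n v).flatten ++ w)
              (shiftOpt (u.length + i.1 * v.length) s1)
              (shiftOpt (u.length + i.1 * v.length) s2) ∧
            shiftOpt (u.length + i.1 * v.length) s1 ≠
              shiftOpt (u.length + i.1 * v.length) s2) ∧
        (∀ i j : Fin n, i ≠ j →
            PairsDisjoint
              (shiftOpt (u.length + i.1 * v.length) s1,
               shiftOpt (u.length + i.1 * v.length) s2)
              (shiftOpt (u.length + j.1 * v.length) s1,
               shiftOpt (u.length + j.1 * v.length) s2)) :=
  umdsdp_pumping_general D hreg h

end DocSpanners
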